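/- arXiv:2411.01980 — 7 statements merged into one kernel-verified Lean document; each statement's English description precedes it below -/
import Mathlib

section
/- Let X be a path-connected Hausdorff space, let r ≥ 2, let p_r : PX → X^r be the map sending a path γ to (γ(0), γ(1/(r-1)), ..., γ((r-2)/(r-1)), γ(1)), and let d : X^r → X^r be given by d(x_1,...,x_r) = (x_1,x_1,...,x_1). For a subset A ⊆ X^r, the following are equivalent: (1) there exists a continuous section s : A → PX of p_r; (2) there exists a homotopy h : A × [0,1] → X^r from the inclusion A ↪ X^r to a map with h(a,1) = d(a) for all a ∈ A. -/
open unitInterval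

/-- The `r` equidistant time points `k/(r-1)` in the unit interval. -/
noncomputable def evalPt (r : ℕ) (hr : 2 ≤ r) (k : Fin r) : unitInterval :=
  ⟨((k : ℕ) : ℝ) / ((r : ℝ) - 1), by
    have h2 : (2 : ℝ) ≤ (r : ℝ) := by exact_mod_cast hr
    have hk : ((k : ℕ) : ℝ) + 1 ≤ (r : ℝ) := by exact_mod_cast k.isLt
    have hpos : (0 : ℝ) < (r : ℝ) - 1 := by linarith
    refine ⟨div_nonneg (by positivity) hpos.le, ?_⟩
    rw [div_le_one hpos]; linarith⟩

/-- The path fibration `p_r : PX → X^r`, evaluation at `r` equidistant points. -/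
noncomputable def pathEval {X : Type*} [TopologicalSpace X] (r : ℕ) (hr : 2 ≤ r)
    (γ : C(unitInterval, X)) : Fin r → X := fun k => γ (evalPt r hr k)

/-- `A ⊆ X^r` admits a continuous sequential motion planner, i.e. a continuous
section of `p_r` over `A`. -/
def HasMotionPlanner {X : Type*} [TopologicalSpace X] (r : ℕ) (hr : 2 ≤ r)
    (A : Set (Fin r → X)) : Prop :=
  ∃ s : A → C(unitInterval, X), Continuous s ∧
    ∀ a : A, pathEval r hr (s a) = (a : Fin r → X)

section Aux
variable {α X : Type*} [TopologicalSpace α] [TopologicalSpace X]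

/-- the `j`-th elementary piece of the glued path. -/
noncomputable def gAux (r : ℕ) (hr : 2 ≤ r) (h : α × unitInterval → Fin r → X)
    (j : ℕ) (p : α × unitInterval) : X :=
  h (p.1, Set.projIcc 0 1 zero_le_one
      (if j % 2 = 0 then 2 * (((r : ℝ) - 1) * (p.2 : ℝ)) - (j : ℝ)
        else (j : ℝ) + 1 - 2 * (((r : ℝ) - 1) * (p.2 : ℝ))))
    ⟨min ((j + 1) / 2) (r - 1), by omega⟩

lemma gAux_cont (r : ℕ) (hr : 2 ≤ r) (h : α × unitInterval → Fin r → X)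
    (hc : Continuous h) (j : ℕ) : Continuous (gAux r hr h j) := by
  have he : Continuous fun p : α × unitInterval =>
      (if j % 2 = 0 then 2 * (((r : ℝ) - 1) * (p.2 : ℝ)) - (j : ℝ)
        else (j : ℝ) + 1 - 2 * (((r : ℝ) - 1) * (p.2 : ℝ))) := by
    split_ifs <;> fun_prop
  exact (continuous_apply _).comp
    (hc.comp (continuous_fst.prodMk (continuous_projIcc.comp he)))

/-- glued map: handles the pieces up to index `m`. -/
noncomputable def wAux (r : ℕ) (hr : 2 ≤ r) (h : α × unitInterval → Fin r → X) :
    ℕ → α × unitInterval → X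
  | 0 => gAux r hr h 0
  | (m + 1) => fun p =>
      if ((r : ℝ) - 1) * (p.2 : ℝ) ≤ ((m : ℝ) + 1) / 2 then wAux r hr h m p
      else gAux r hr h (m + 1) p

lemma wAux_top (r : ℕ) (hr : 2 ≤ r) (h : α × unitInterval → Fin r → X) :
    ∀ (m : ℕ) (p : α × unitInterval), (m : ℝ) / 2 < ((r : ℝ) - 1) * (p.2 : ℝ) →
      wAux r hr h m p = gAux r hr h m p := by
  intro m
  induction m with
  | zero => intro p _; rfl
  | succ m ih =>
      intro p hp
      have : ¬ (((r : ℝ) - 1) * (p.2 : ℝ) ≤ ((m : ℝ) + 1) / 2) := by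
        push_cast at hp ⊢; linarith
      simp [wAux, this]

lemma gAux_match (r : ℕ) (hr : 2 ≤ r) (h : α × unitInterval → Fin r → X)
    (h1 : ∀ a k, h (a, 1) k = h (a, 1) ⟨0, Nat.lt_of_lt_of_le Nat.zero_lt_two hr⟩) :
    ∀ (m : ℕ) (p : α × unitInterval), ((r : ℝ) - 1) * (p.2 : ℝ) = ((m : ℝ) + 1) / 2 →
      gAux r hr h m p = gAux r hr h (m + 1) p := by
  intro m p hp
  rcases Nat.mod_two_eq_zero_or_one m with hm0 | hm0
  · -- m even : both times are 1, use h1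
    have hm1 : (m + 1) % 2 ≠ 0 := by omega
    have e1 : 2 * (((r : ℝ) - 1) * (p.2 : ℝ)) - (m : ℝ) = 1 := by
      rw [hp]; ring
    have e2 : ((m : ℝ) + 1) + 1 - 2 * (((r : ℝ) - 1) * (p.2 : ℝ)) = 1 := by
      rw [hp]; ring
    simp only [gAux, hm0, if_true, hm1, if_false]
    push_cast
    rw [e1, e2]
    have hproj : Set.projIcc (0:ℝ) 1 zero_le_one 1 = (1 : unitInterval) := by
      simpa using Set.projIcc_right (0:ℝ) 1 zero_le_one
    rw [hproj, h1 p.1]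
    conv_rhs => rw [h1 p.1]
  · -- m odd : both times are 0 and indices agree
    have hm1 : (m + 1) % 2 = 0 := by omega
    have e1 : (m : ℝ) + 1 - 2 * (((r : ℝ) - 1) * (p.2 : ℝ)) = 0 := by
      rw [hp]; ring
    have e2 : 2 * (((r : ℝ) - 1) * (p.2 : ℝ)) - ((m : ℝ) + 1) = 0 := by
      rw [hp]; ring
    have hm0' : m % 2 ≠ 0 := by omega
    simp only [gAux, hm0', if_false, hm1, if_true]
    push_cast
    rw [e1, e2]
    congr 1
    exact Fin.ext (by simp only [Fin.val_mk]; omega)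

lemma wAux_cont (r : ℕ) (hr : 2 ≤ r) (h : α × unitInterval → Fin r → X)
    (hc : Continuous h)
    (h1 : ∀ a k, h (a, 1) k = h (a, 1) ⟨0, Nat.lt_of_lt_of_le Nat.zero_lt_two hr⟩) (m : ℕ) :
    Continuous (wAux r hr h m) := by
  induction m with
  | zero => exact gAux_cont r hr h hc 0
  | succ m ih =>
      refine Continuous.if_le ih (gAux_cont r hr h hc (m + 1)) (by fun_prop)
        continuous_const ?_
      intro p hp
      rw [wAux_top r hr h m p (by linarith [hp]),
        gAux_match r hr h h1 m p hp]

lemma wAux_val (r : ℕ) (hr : 2 ≤ r) (h : α × unitInterval → Fin r → X)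
    (h1 : ∀ a k, h (a, 1) k = h (a, 1) ⟨0, Nat.lt_of_lt_of_le Nat.zero_lt_two hr⟩) :
    ∀ (m j : ℕ) (p : α × unitInterval), j ≤ m → (j : ℝ) / 2 ≤ ((r : ℝ) - 1) * (p.2 : ℝ) →
      ((r : ℝ) - 1) * (p.2 : ℝ) ≤ ((j : ℝ) + 1) / 2 →
      wAux r hr h m p = gAux r hr h j p := by
  intro m
  induction m with
  | zero =>
      intro j p hj _ _
      interval_cases j
      rfl
  | succ m ih =>
      intro j p hj hl hu
      by_cases hcase : ((r : ℝ) - 1) * (p.2 : ℝ) ≤ ((m : ℝ) + 1) / 2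
      · rw [show wAux r hr h (m+1) p = wAux r hr h m p by simp [wAux, hcase]]
        rcases Nat.lt_or_ge j (m + 1) with hjm | hjm
        · exact ih j p (by omega) hl hu
        · -- j = m+1, and u = (m+1)/2 exactly
          have hje : j = m + 1 := by omega
          subst hje
          have heq : ((r : ℝ) - 1) * (p.2 : ℝ) = ((m : ℝ) + 1) / 2 := by
            push_cast at hl; linarith
          rw [wAux_top r hr h m p (by rw [heq]; push_cast; linarith),
            gAux_match r hr h h1 m p heq]
      · push_neg at hcase
        have hje : j = m + 1 := by
          by_contra hne
          have : (j : ℝ) + 1 ≤ (m : ℝ) + 1 := by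
            have : j ≤ m := by omega
            push_cast; exact_mod_cast by exact_mod_cast Nat.add_le_add_right this 1
          linarith
        subst hje
        simp only [wAux, if_neg (not_le.mpr hcase)]

end Aux

theorem stmt0 {X : Type*} [TopologicalSpace X] [T2Space X] [PathConnectedSpace X]
    (r : ℕ) (hr : 2 ≤ r) (A : Set (Fin r → X)) :
    HasMotionPlanner r hr A ↔
      ∃ h : ↥A × unitInterval → (Fin r → X), Continuous h ∧
        (∀ a : ↥A, h (a, 0) = (a : Fin r → X)) ∧
        (∀ a : ↥A, h (a, 1) = fun _ => (a : Fin r → X) ⟨0, by omega⟩) := by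
  constructor
  · rintro ⟨s, hs, hsec⟩
    refine ⟨fun p => fun k => (s p.1)
      ⟨(σ p.2 : ℝ) * (evalPt r hr k : ℝ),
        unitInterval.mul_mem (σ p.2).2 (evalPt r hr k).2⟩, ?_, ?_, ?_⟩
    · refine continuous_pi fun k => ?_
      have hinner : Continuous fun p : ↥A × unitInterval =>
          (⟨(σ p.2 : ℝ) * (evalPt r hr k : ℝ),
            unitInterval.mul_mem (σ p.2).2 (evalPt r hr k).2⟩ : unitInterval) :=
        Continuous.subtype_mk
          ((continuous_subtype_val.comp
            (unitInterval.continuous_symm.comp continuous_snd)).mul continuous_const) _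
      exact continuous_eval.comp ((hs.comp continuous_fst).prodMk hinner)
    · intro a
      funext k
      have he : (⟨(σ (0:unitInterval) : ℝ) * (evalPt r hr k : ℝ),
          unitInterval.mul_mem (σ (0:unitInterval)).2 (evalPt r hr k).2⟩ : unitInterval)
          = evalPt r hr k := Subtype.ext (by simp)
      simpa [he, pathEval] using congrFun (hsec a) k
    · intro a
      funext k
      have he : (⟨(σ (1:unitInterval) : ℝ) * (evalPt r hr k : ℝ),
          unitInterval.mul_mem (σ (1:unitInterval)).2 (evalPt r hr k).2⟩ : unitInterval)
          = evalPt r hr ⟨0, by omega⟩ := Subtype.ext (by simp [evalPt])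
      have hfin := congrFun (hsec a) ⟨0, by omega⟩
      simp only [pathEval] at hfin
      beta_reduce
      rw [he]
      exact hfin
  · rintro ⟨h, hc, h0, h1⟩
    have h1' : ∀ (a : ↥A) (k : Fin r), h (a, 1) k = h (a, 1) ⟨0, by omega⟩ := by
      intro a k; rw [h1 a]
    set m : ℕ := 2 * (r - 1) - 1 with hm
    have hFc : Continuous (wAux r hr h m) := wAux_cont r hr h hc h1' m
    let Fc : C(↥A × unitInterval, X) := ⟨_, hFc⟩
    refine ⟨fun a => Fc.curry a, Fc.curry.continuous, ?_⟩
    intro a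
    funext k
    have hrR : (2 : ℝ) ≤ (r : ℝ) := by exact_mod_cast hr
    have hrne : ((r : ℝ) - 1) ≠ 0 := by linarith
    have hu : ((r : ℝ) - 1) * ((evalPt r hr k : ℝ)) = (k : ℕ) := by
      show ((r : ℝ) - 1) * (((k : ℕ) : ℝ) / ((r : ℝ) - 1)) = _
      field_simp
    have hp0 : Set.projIcc (0:ℝ) 1 zero_le_one 0 = (0 : unitInterval) := by
      apply Subtype.ext
      rw [Set.coe_projIcc]; norm_num
    show wAux r hr h m (a, evalPt r hr k) = (a : Fin r → X) k
    rcases Nat.lt_or_ge (k : ℕ) (r - 1) with hk | hk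
    · -- interior points : use piece j = 2*k
      have hcast : ((2 * (k : ℕ) : ℕ) : ℝ) = 2 * ((k : ℕ) : ℝ) := by push_cast; ring
      rw [wAux_val r hr h h1' m (2 * (k : ℕ)) (a, evalPt r hr k) (by omega)
        (by rw [hu, hcast]; linarith) (by rw [hu, hcast]; linarith)]
      have hmod : (2 * (k : ℕ)) % 2 = 0 := by omega
      have harg : 2 * (((r : ℝ) - 1) * ((evalPt r hr k : ℝ))) - ((2 * (k : ℕ) : ℕ) : ℝ)
          = 0 := by rw [hu, hcast]; ring
      simp only [gAux, hmod, if_true, harg, hp0]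
      have hidx : (⟨min ((2 * (k : ℕ) + 1) / 2) (r - 1), by omega⟩ : Fin r) = k :=
        Fin.ext (by simp only [Fin.val_mk]; omega)
      rw [hidx, h0 a]
    · -- the last point : k = r - 1, use piece j = m (odd)
      have hke : (k : ℕ) = r - 1 := by omega
      have hcast : ((m : ℕ) : ℝ) = 2 * ((r : ℝ) - 1) - 1 := by
        have h3 : m = 2 * r - 3 := by omega
        rw [h3, Nat.cast_sub (by omega : 3 ≤ 2 * r)]; push_cast; ring
      have hukr : ((r : ℝ) - 1) * ((evalPt r hr k : ℝ)) = (r : ℝ) - 1 := by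
        rw [hu, hke]; push_cast [Nat.cast_sub (by omega : 1 ≤ r)]; ring
      rw [wAux_val r hr h h1' m m (a, evalPt r hr k) le_rfl
        (by rw [hukr, hcast]; linarith) (by rw [hukr, hcast]; linarith)]
      have hmod : m % 2 ≠ 0 := by omega
      have harg : ((m : ℕ) : ℝ) + 1 - 2 * (((r : ℝ) - 1) * ((evalPt r hr k : ℝ)))
          = 0 := by rw [hukr, hcast]; ring
      simp only [gAux, hmod, if_false, harg, hp0]
      have hidx : (⟨min ((m + 1) / 2) (r - 1), by omega⟩ : Fin r) = k :=
        Fin.ext (by simp only [Fin.val_mk]; omega)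
      rw [hidx, h0 a]
end

section
/- Let X be a path-connected ANR and r ≥ 2. If A ⊆ X^r is a closed subset admitting a continuous section of p_r : PX → X^r, then there exists an open neighborhood U ⊆ X^r of A admitting a continuous section of p_r. -/
open unitInterval

universe u

/-- A metrizable space `Y` is an absolute neighborhood retract (ANR) if every
continuous map from a closed subset of a metrizable space into `Y` extends
continuously to an open neighborhood. -/
def IsANR (Y : Type u) [TopologicalSpace Y] : Prop :=
  TopologicalSpace.MetrizableSpace Y ∧
  ∀ (T : Type u) (_ : TopologicalSpace T), TopologicalSpace.MetrizableSpace T →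
    ∀ (A : Set T), IsClosed A → ∀ f : C(A, Y),
      ∃ (U : Set T) (_ : IsOpen U) (hAU : A ⊆ U) (g : C(U, Y)),
        ∀ a : A, g (Set.inclusion hAU a) = f a

lemma evalPt_injective (r : ℕ) (hr : 2 ≤ r) : Function.Injective (evalPt r hr) := by
  intro k k' h
  have h2 : (2 : ℝ) ≤ (r : ℝ) := by exact_mod_cast hr
  have hpos : (0 : ℝ) < (r : ℝ) - 1 := by linarith
  have hne : (r : ℝ) - 1 ≠ 0 := hpos.ne'
  have := Subtype.ext_iff.mp h
  simp only [evalPt] at this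
  rw [div_eq_div_iff hne hne] at this
  have h4 : ((k : ℕ) : ℝ) = ((k' : ℕ) : ℝ) := mul_right_cancel₀ hne this
  have h5 : (k : ℕ) = (k' : ℕ) := by exact_mod_cast h4
  exact Fin.ext h5

lemma glue_bin {α β : Type*} [TopologicalSpace α] [TopologicalSpace β] {s t : Set α}
    {f : α → β} (hs : IsClosed s) (ht : IsClosed t)
    (hfs : ContinuousOn f s) (hft : ContinuousOn f t) : ContinuousOn f (s ∪ t) := by
  intro x hx
  have h1 : ContinuousWithinAt f s x := by
    by_cases h : x ∈ s
    · exact hfs x h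
    · exact continuousWithinAt_of_notMem_closure (by rwa [hs.closure_eq])
  have h2 : ContinuousWithinAt f t x := by
    by_cases h : x ∈ t
    · exact hft x h
    · exact continuousWithinAt_of_notMem_closure (by rwa [ht.closure_eq])
  exact h1.union h2

lemma glue_finset {α β ι : Type*} [TopologicalSpace α] [TopologicalSpace β]
    {f : α → β} (s : Finset ι) (S : ι → Set α) (hS : ∀ i, IsClosed (S i))
    (hf : ∀ i, ContinuousOn f (S i)) : ContinuousOn f (⋃ i ∈ s, S i) := by
  classical
  induction s using Finset.induction with
  | empty => simp
  | insert _ _ h ih =>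
      rw [Finset.set_biUnion_insert]
      exact glue_bin (hS _) (Set.Finite.isClosed_biUnion (Finset.finite_toSet _)
        (fun i _ => hS i)) (hf _) ih

theorem stmt5 {X : Type u} [TopologicalSpace X] [PathConnectedSpace X] (hX : IsANR X)
    (r : ℕ) (hr : 2 ≤ r) (A : Set (Fin r → X)) (hA : IsClosed A)
    (hplan : HasMotionPlanner r hr A) :
    ∃ U : Set (Fin r → X), IsOpen U ∧ A ⊆ U ∧ HasMotionPlanner r hr U := by
  classical
  obtain ⟨s, hs_cont, hs_sec⟩ := hplan
  haveI := hX.1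
  haveI : Nonempty (Fin r) := ⟨⟨0, by omega⟩⟩
  set T := (Fin r → X) × unitInterval with hT
  let idx : unitInterval → Fin r := Function.invFun (evalPt r hr)
  have hidx : ∀ k, idx (evalPt r hr k) = k := fun k =>
    Function.leftInverse_invFun (evalPt_injective r hr) k
  let fFun : T → X := fun p => if h : p.1 ∈ A then s ⟨p.1, h⟩ p.2 else p.1 (idx p.2)
  have key : ∀ (u : Fin r → X) (k : Fin r), fFun (u, evalPt r hr k) = u k := by
    intro u k
    by_cases h : u ∈ A
    · simp only [fFun, dif_pos h]
      exact congrFun (hs_sec ⟨u, h⟩) k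
    · simp only [fFun, dif_neg h, hidx]
  set C1 : Set T := A ×ˢ Set.univ with hC1
  set C2 : Set T := Set.univ ×ˢ Set.range (evalPt r hr) with hC2
  have hC1closed : IsClosed C1 := hA.prod isClosed_univ
  have hC2closed : IsClosed C2 := isClosed_univ.prod (Set.finite_range _).isClosed
  set A' : Set T := C1 ∪ C2 with hA'
  have hA'closed : IsClosed A' := hC1closed.union hC2closed
  have hcont1 : ContinuousOn fFun C1 := by
    rw [continuousOn_iff_continuous_restrict]
    have hinner : Continuous fun q : C1 => ((⟨(q : T).1, q.2.1⟩ : ↥A), (q : T).2) :=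
      Continuous.prodMk (Continuous.subtype_mk continuous_subtype_val.fst _)
        continuous_subtype_val.snd
    have h1 : Continuous fun q : C1 =>
        (ContinuousMap.uncurry (⟨s, hs_cont⟩ : C(↥A, C(unitInterval, X))))
          ((⟨(q : T).1, q.2.1⟩ : ↥A), (q : T).2) :=
      (ContinuousMap.uncurry _).continuous.comp hinner
    convert h1 using 1
    funext q
    show fFun q = _
    simp only [fFun]
    rw [dif_pos q.2.1]
    rfl
  have hcont2 : ContinuousOn fFun C2 := by
    have hrw : C2 = ⋃ k ∈ (Finset.univ : Finset (Fin r)),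
        (Set.univ ×ˢ ({evalPt r hr k} : Set unitInterval)) := by
      ext ⟨w, t⟩
      constructor
      · rintro ⟨-, k, rfl⟩
        exact Set.mem_biUnion (Finset.mem_univ k) ⟨Set.mem_univ w, rfl⟩
      · intro h
        rw [Set.mem_iUnion₂] at h
        obtain ⟨k, -, -, ht⟩ := h
        exact ⟨Set.mem_univ w, k, ht.symm⟩
    rw [hrw]
    apply glue_finset
    · intro k
      exact isClosed_univ.prod isClosed_singleton
    · intro k
      apply ((continuous_apply k).comp continuous_fst).continuousOn.congr
      rintro ⟨u, t⟩ ⟨-, ht⟩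
      rcases ht with rfl
      exact key u k
  have hcontA' : ContinuousOn fFun A' := glue_bin hC1closed hC2closed hcont1 hcont2
  obtain ⟨U', hU'open, hsub, g, hg⟩ :=
    hX.2 T inferInstance inferInstance A' hA'closed ⟨A'.restrict fFun,
      continuousOn_iff_continuous_restrict.mp hcontA'⟩
  set U : Set (Fin r → X) := {u | ∀ t : unitInterval, (u, t) ∈ U'} with hU
  have hUopen : IsOpen U := by
    rw [isOpen_iff_forall_mem_open]
    intro u hu
    obtain ⟨V, W, hVopen, -, hV, hW, hVW⟩ := generalized_tube_lemma isCompact_singleton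
      isCompact_univ hU'open (by
        rintro ⟨v, t⟩ ⟨hv, -⟩
        rcases hv with rfl
        exact hu t)
    exact ⟨V, fun v hv t => hVW ⟨hv, hW (Set.mem_univ t)⟩, hVopen, hV rfl⟩
  have hAU : A ⊆ U := fun a ha t => hsub (Or.inl ⟨ha, Set.mem_univ t⟩)
  refine ⟨U, hUopen, hAU, ?_⟩
  refine ⟨fun u => ⟨fun t => g ⟨(u.1, t), u.2 t⟩, ?_⟩, ?_, ?_⟩
  · exact g.continuous.comp (Continuous.subtype_mk (by fun_prop) _)
  · apply ContinuousMap.continuous_of_continuous_uncurry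
    exact g.continuous.comp (Continuous.subtype_mk
      (Continuous.prodMk (continuous_subtype_val.comp continuous_fst) continuous_snd) _)
  · intro a
    funext k
    have hmem : ((a : Fin r → X), evalPt r hr k) ∈ A' :=
      Or.inr ⟨Set.mem_univ _, ⟨k, rfl⟩⟩
    have h1 : g ⟨((a : Fin r → X), evalPt r hr k), a.2 (evalPt r hr k)⟩
        = g (Set.inclusion hsub ⟨_, hmem⟩) := by
      congr 1
    show g ⟨((a : Fin r → X), evalPt r hr k), a.2 (evalPt r hr k)⟩ = (a : Fin r → X) k
    rw [h1, hg ⟨_, hmem⟩]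
    exact key _ k
end

section
/- Let X be a topological space, Φ : X → X continuous, F : X → ℝ a Lyapunov function for Φ, and suppose (Φ, F) satisfies condition (D). Let A ⊆ X with Φ(A) ⊆ A and closure(A) ∩ Fix Φ ⊆ A. Then the restricted pair (Φ|_A : A → A, F|_A) satisfies condition (D). -/
/-- Condition (D) of Rudyak–Schlenk for a pair `(φ, f)`:
(D₁) `f(φ(x)) < f(x)` for all `x ∉ Fix φ`; and
(D₂) for every nonempty subset `A` on which `f` is bounded and with
`inf {f(a) − f(φ(a)) | a ∈ A} = 0`, the closure of `A` meets `Fix φ`. -/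
def CondD {X : Type*} [TopologicalSpace X] (φ : X → X) (f : X → ℝ) : Prop :=
  (∀ x, φ x ≠ x → f (φ x) < f x) ∧
  (∀ A : Set X, A.Nonempty → (∃ C : ℝ, ∀ a ∈ A, |f a| ≤ C) →
    sInf ((fun a => f a - f (φ a)) '' A) = 0 →
    (closure A ∩ {x | φ x = x}).Nonempty)

/-! Both conditions are tested on `B ⊆ A` by pushing `B` into `X`. For (D₂), the fixed point
found in the ambient closure of `B` lies in `closure A`, hence in `A` by hypothesis, and there
the closure of `B` in the subspace is the trace of its ambient closure. -/

open Set

section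
variable {X : Type*} [TopologicalSpace X] {Φ : X → X} {F : X → ℝ} {A : Set X}

theorem CondD.lt_of_restrict_ne (hD : CondD Φ F) (hmaps : MapsTo Φ A A) (x : A)
    (hx : hmaps.restrict Φ A A x ≠ x) : F (hmaps.restrict Φ A A x) < F x :=
  hD.1 x fun h => hx (Subtype.ext h)

theorem CondD.closure_inter_fixed_restrict_nonempty (hD : CondD Φ F) (hmaps : MapsTo Φ A A)
    (hcl : closure A ∩ {x | Φ x = x} ⊆ A) (B : Set A) (hB : B.Nonempty)
    (hbdd : ∃ C : ℝ, ∀ b ∈ B, |F b| ≤ C)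
    (hinf : sInf ((fun b : A => F b - F (hmaps.restrict Φ A A b)) '' B) = 0) :
    (closure B ∩ {x | hmaps.restrict Φ A A x = x}).Nonempty := by
  obtain ⟨C, hC⟩ := hbdd
  have hbdd' : ∃ C : ℝ, ∀ a ∈ Subtype.val '' B, |F a| ≤ C :=
    ⟨C, by rintro _ ⟨b, hb, rfl⟩; exact hC b hb⟩
  have hinf' : sInf ((fun a => F a - F (Φ a)) '' (Subtype.val '' B)) = 0 := by
    rwa [image_image]
  obtain ⟨x, hx_cl, hx_fix⟩ := hD.2 _ (hB.image _) hbdd' hinf'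
  have hxA : x ∈ A :=
    hcl ⟨closure_mono (image_subset_iff.2 fun b _ => b.2) hx_cl, hx_fix⟩
  exact ⟨⟨x, hxA⟩, closure_subtype.2 hx_cl, Subtype.ext hx_fix⟩

end

theorem stmt9_general {X : Type*} [TopologicalSpace X] (Φ : X → X)
    (F : X → ℝ) (hD : CondD Φ F)
    (A : Set X) (hmaps : Set.MapsTo Φ A A)
    (hcl : closure A ∩ {x | Φ x = x} ⊆ A) :
    CondD (Set.MapsTo.restrict Φ A A hmaps) (fun a : A => F a) :=
  ⟨hD.lt_of_restrict_ne hmaps, hD.closure_inter_fixed_restrict_nonempty hmaps hcl⟩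

theorem stmt9 {X : Type*} [TopologicalSpace X] (Φ : X → X) (hΦ : Continuous Φ)
    (F : X → ℝ) (hLyap : ∀ x, F (Φ x) ≤ F x) (hD : CondD Φ F)
    (A : Set X) (hmaps : Set.MapsTo Φ A A)
    (hcl : closure A ∩ {x | Φ x = x} ⊆ A) :
    CondD (Set.MapsTo.restrict Φ A A hmaps) (fun a : A => F a) :=
  stmt9_general Φ F hD A hmaps hcl
end

section
/- Let n ∈ ℕ, n ≥ 1, and r ≥ 2. Consider f_n : (S^n)^r → ℝ defined by f_n(x_1,...,x_r) = Σ_{i=1}^{r-1} ‖x_i − x_{i+1}‖², where S^n ⊂ ℝ^{n+1} is the unit sphere with the Euclidean norm. Then the critical set of f_n (as a smooth function on the product manifold) is exactly {(x_1,...,x_r) ∈ (S^n)^r : x_i ∈ {x_1, −x_1} for all i = 2,...,r}. -/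
open scoped RealInnerProductSpace

lemma aux_par {E : Type*} [NormedAddCommGroup E] [InnerProductSpace ℝ E]
    {x₀ c : E} (hx : ‖x₀‖ = 1)
    (h : ∀ w : E, ⟪x₀, w⟫ = 0 → ⟪c, w⟫ = 0) :
    c = ⟪c, x₀⟫ • x₀ := by
  set w := c - ⟪c, x₀⟫ • x₀ with hw_def
  have hx2 : ⟪x₀, x₀⟫ = 1 := by
    rw [real_inner_self_eq_norm_sq, hx]; norm_num
  have hw : ⟪x₀, w⟫ = 0 := by
    rw [hw_def, inner_sub_right, real_inner_smul_right, hx2, real_inner_comm x₀ c]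
    ring
  have hcw := h w hw
  have hww : ⟪w, w⟫ = 0 := by
    have : ⟪w, w⟫ = ⟪c, w⟫ - ⟪c, x₀⟫ * ⟪x₀, w⟫ := by
      rw [hw_def, inner_sub_left, real_inner_smul_left]
    rw [this, hcw, hw]; ring
  have : w = 0 := by rwa [inner_self_eq_zero] at hww
  exact sub_eq_zero.mp this

lemma aux_unit {E : Type*} [NormedAddCommGroup E] [InnerProductSpace ℝ E]
    {x₀ y : E} {s : ℝ} (hx : ‖x₀‖ = 1) (hy : ‖y‖ = 1) (h : y = s • x₀) :
    y = x₀ ∨ y = -x₀ := by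
  have habs : |s| = 1 := by
    rw [h, norm_smul, hx, mul_one, Real.norm_eq_abs] at hy
    exact hy
  rcases (abs_eq (by norm_num : (0:ℝ) ≤ 1)).mp habs with h1 | h1
  · left; rw [h, h1, one_smul]
  · right; rw [h, h1, neg_one_smul]

theorem stmt10 (n r : ℕ) (hn : 1 ≤ n) (hr : 2 ≤ r)
    (f : (Fin r → EuclideanSpace ℝ (Fin (n + 1))) → ℝ)
    (hf : ∀ x : Fin r → EuclideanSpace ℝ (Fin (n + 1)),
      f x = ∑ i : Fin (r - 1),
        ‖x ⟨i.1, by have := i.isLt; omega⟩ - x ⟨i.1 + 1, by have := i.isLt; omega⟩‖ ^ 2)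
    (x : Fin r → EuclideanSpace ℝ (Fin (n + 1))) (hx : ∀ i, ‖x i‖ = 1) :
    -- the differential of `f` vanishes on the tangent space of `(S^n)^r` at `x` …
    (∀ v : Fin r → EuclideanSpace ℝ (Fin (n + 1)),
        (∀ i, (inner ℝ (x i) (v i) : ℝ) = 0) → fderiv ℝ f x v = 0)
      -- … if and only if each `x i` is `x 1` or `−x 1`:
      ↔ ∀ i, x i = x ⟨0, by omega⟩ ∨ x i = -x ⟨0, by omega⟩ := by
  classical
  have har : ∀ i : Fin (r-1), i.1 < r := fun i => by have := i.isLt; omega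
  have hbr : ∀ i : Fin (r-1), i.1 + 1 < r := fun i => by have := i.isLt; omega
  set a : Fin (r-1) → Fin r := fun i => ⟨i.1, har i⟩ with ha_def
  set b : Fin (r-1) → Fin r := fun i => ⟨i.1 + 1, hbr i⟩ with hb_def
  set L : Fin (r-1) → ((Fin r → EuclideanSpace ℝ (Fin (n + 1))) →L[ℝ] EuclideanSpace ℝ (Fin (n + 1))) :=
    fun i => ContinuousLinearMap.proj (R := ℝ) (φ := fun _ : Fin r => EuclideanSpace ℝ (Fin (n + 1))) (a i) -
      ContinuousLinearMap.proj (R := ℝ) (φ := fun _ : Fin r => EuclideanSpace ℝ (Fin (n + 1))) (b i) with hL_def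
  have hL : ∀ (i : Fin (r-1)) (v : Fin r → EuclideanSpace ℝ (Fin (n + 1))), L i v = v (a i) - v (b i) := fun i v => rfl
  have hfun : f = fun y => ∑ i : Fin (r-1), ⟪L i y, L i y⟫ := by
    funext y
    rw [hf y]
    refine Finset.sum_congr rfl fun i _ => ?_
    rw [hL i y, real_inner_self_eq_norm_sq]
  have hD : HasFDerivAt f
      (∑ i : Fin (r-1), ((fderivInnerCLM ℝ (L i x, L i x)).comp ((L i).prod (L i)))) x := by
    rw [hfun]
    exact HasFDerivAt.fun_sum fun i _ => ((L i).hasFDerivAt.inner ℝ (L i).hasFDerivAt)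
  have hfderiv : ∀ v : Fin r → EuclideanSpace ℝ (Fin (n + 1)), fderiv ℝ f x v =
      ∑ i : Fin (r-1), 2 * ⟪x (a i) - x (b i), v (a i) - v (b i)⟫ := by
    intro v
    rw [hD.fderiv, ContinuousLinearMap.sum_apply]
    refine Finset.sum_congr rfl fun i _ => ?_
    rw [ContinuousLinearMap.comp_apply, ContinuousLinearMap.prod_apply, fderivInnerCLM_apply,
      hL i x, hL i v, real_inner_comm (v (a i) - v (b i))]
    ring
  constructor
  · intro H
    have key : ∀ (j : Fin r) (w : EuclideanSpace ℝ (Fin (n + 1))), ⟪x j, w⟫ = 0 →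
        (∑ i : Fin (r-1), 2 * ⟪x (a i) - x (b i), if a i = j then w else 0⟫)
          - (∑ i : Fin (r-1), 2 * ⟪x (a i) - x (b i), if b i = j then w else 0⟫) = 0 := by
      intro j w hw
      have hv : ∀ m : Fin r, ⟪x m, (fun m => if m = j then w else 0) m⟫ = 0 := by
        intro m
        by_cases h : m = j
        · subst h; simpa using hw
        · simp [h]
      have h0 := H (fun m => if m = j then w else 0) hv
      calc (∑ i : Fin (r-1), 2 * ⟪x (a i) - x (b i), if a i = j then w else 0⟫)
          - (∑ i : Fin (r-1), 2 * ⟪x (a i) - x (b i), if b i = j then w else 0⟫)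
          = fderiv ℝ f x (fun m => if m = j then w else 0) := by
            rw [hfderiv, ← Finset.sum_sub_distrib]
            refine Finset.sum_congr rfl fun i _ => ?_
            show _ = 2 * ⟪x (a i) - x (b i), (if a i = j then w else 0) - (if b i = j then w else 0)⟫
            rw [inner_sub_right]; ring
        _ = 0 := h0
    have evalA : ∀ (k : ℕ) (hk : k < r - 1) (w : EuclideanSpace ℝ (Fin (n+1))),
        (∑ i : Fin (r-1), 2 * ⟪x (a i) - x (b i), if a i = ⟨k, by omega⟩ then w else 0⟫)
          = 2 * ⟪x ⟨k, by omega⟩ - x ⟨k+1, by omega⟩, w⟫ := by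
      intro k hk w
      rw [Finset.sum_eq_single (⟨k, hk⟩ : Fin (r-1))]
      · rw [if_pos rfl]
      · intro i _ hne
        rw [if_neg, inner_zero_right, mul_zero]
        intro hcon
        have : i.1 = k := by simpa [ha_def, Fin.ext_iff] using hcon
        exact hne (Fin.ext this)
      · intro hcon; exact absurd (Finset.mem_univ _) hcon
    have evalB : ∀ (k : ℕ) (hk : k + 1 < r) (w : EuclideanSpace ℝ (Fin (n+1))),
        (∑ i : Fin (r-1), 2 * ⟪x (a i) - x (b i), if b i = ⟨k+1, hk⟩ then w else 0⟫)
          = 2 * ⟪x ⟨k, by omega⟩ - x ⟨k+1, hk⟩, w⟫ := by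
      intro k hk w
      rw [Finset.sum_eq_single (⟨k, by omega⟩ : Fin (r-1))]
      · rw [if_pos rfl]
      · intro i _ hne
        rw [if_neg, inner_zero_right, mul_zero]
        intro hcon
        have h6 : i.1 + 1 = k + 1 := congrArg Fin.val hcon
        exact hne (Fin.ext (show (i : ℕ) = k by omega))
      · intro hcon; exact absurd (Finset.mem_univ _) hcon
    have evalB0 : ∀ (w : EuclideanSpace ℝ (Fin (n+1))),
        (∑ i : Fin (r-1), 2 * ⟪x (a i) - x (b i), if b i = ⟨0, by omega⟩ then w else 0⟫) = 0 := by
      intro w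
      refine Finset.sum_eq_zero fun i _ => ?_
      rw [if_neg, inner_zero_right, mul_zero]
      intro hcon
      have h6 : i.1 + 1 = 0 := congrArg Fin.val hcon
      omega
    have C0 : ∀ w : EuclideanSpace ℝ (Fin (n+1)), ⟪x ⟨0, by omega⟩, w⟫ = 0 →
        ⟪x ⟨0, by omega⟩ - x ⟨1, by omega⟩, w⟫ = 0 := by
      intro w hw
      have h := key ⟨0, by omega⟩ w hw
      rw [evalA 0 (by omega) w, evalB0 w] at h
      linarith
    have Cmid : ∀ (k : ℕ) (hk : k + 2 < r) (w : EuclideanSpace ℝ (Fin (n+1))),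
        ⟪x ⟨k+1, by omega⟩, w⟫ = 0 →
        ⟪(x ⟨k+1, by omega⟩ - x ⟨k+2, by omega⟩) - (x ⟨k, by omega⟩ - x ⟨k+1, by omega⟩), w⟫ = 0 := by
      intro k hk w hw
      have h := key ⟨k+1, by omega⟩ w hw
      rw [evalA (k+1) (by omega) w, evalB k (by omega) w] at h
      rw [inner_sub_left]
      have he : (⟨k+1+1, by omega⟩ : Fin r) = ⟨k+2, by omega⟩ := rfl
      rw [he] at h
      linarith
    have x0norm : ‖x ⟨0, by omega⟩‖ = 1 := hx _
    have s0 : x ⟨0, by omega⟩ ∈ Submodule.span ℝ ({x ⟨0, by omega⟩} : Set (EuclideanSpace ℝ (Fin (n+1)))) :=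
      Submodule.mem_span_singleton_self _
    have main : ∀ k (hk : k < r), x ⟨k, hk⟩ = x ⟨0, by omega⟩ ∨ x ⟨k, hk⟩ = -x ⟨0, by omega⟩ := by
      intro k
      induction k using Nat.strong_induction_on with
      | _ k IH =>
        intro hk
        rcases k with _ | (_ | m)
        · exact Or.inl rfl
        · have hpar := aux_par x0norm C0
          have h1 : x ⟨1, hk⟩ = x ⟨0, by omega⟩ -
              ⟪x ⟨0, by omega⟩ - x ⟨1, by omega⟩, x ⟨0, by omega⟩⟫ • x ⟨0, by omega⟩ := by
            rw [← hpar]; abel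
          have h1' : x ⟨1, hk⟩ = (1 - ⟪x ⟨0, by omega⟩ - x ⟨1, by omega⟩, x ⟨0, by omega⟩⟫) •
              x ⟨0, by omega⟩ := by
            rw [sub_smul, one_smul]; exact h1
          exact aux_unit x0norm (hx _) h1'
        · have IH0 := IH m (by omega) (by omega)
          have IH1 := IH (m+1) (by omega) (by omega)
          have hpar := aux_par (hx ⟨m+1, by omega⟩) (Cmid m hk)
          have h4 := sub_eq_iff_eq_add.mp hpar
          have h5 : x ⟨m+2, hk⟩ = x ⟨m+1, by omega⟩ -
              ((⟪(x ⟨m+1, by omega⟩ - x ⟨m+2, by omega⟩) - (x ⟨m, by omega⟩ - x ⟨m+1, by omega⟩),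
                  x ⟨m+1, by omega⟩⟫) • x ⟨m+1, by omega⟩
                + (x ⟨m, by omega⟩ - x ⟨m+1, by omega⟩)) := by
            rw [← h4]; abel
          have m1 : x ⟨m+1, (by omega : m+1 < r)⟩ ∈
              Submodule.span ℝ ({x ⟨0, by omega⟩} : Set (EuclideanSpace ℝ (Fin (n+1)))) := by
            rcases IH1 with h | h <;> rw [h]
            · exact s0
            · exact neg_mem s0
          have m0 : x ⟨m, (by omega : m < r)⟩ ∈
              Submodule.span ℝ ({x ⟨0, by omega⟩} : Set (EuclideanSpace ℝ (Fin (n+1)))) := by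
            rcases IH0 with h | h <;> rw [h]
            · exact s0
            · exact neg_mem s0
          have hmem : x ⟨m+2, hk⟩ ∈
              Submodule.span ℝ ({x ⟨0, by omega⟩} : Set (EuclideanSpace ℝ (Fin (n+1)))) := by
            rw [h5]
            exact sub_mem m1 (add_mem (Submodule.smul_mem _ _ m1) (sub_mem m0 m1))
          obtain ⟨s, hs⟩ := Submodule.mem_span_singleton.mp hmem
          exact aux_unit x0norm (hx _) hs.symm
    intro i
    have := main i.1 i.2
    simpa using this
  · intro hpm v hv
    rw [hfderiv v]
    have hz0 : ∀ k : Fin r, ⟪x ⟨0, by omega⟩, v k⟫ = 0 := by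
      intro k
      rcases hpm k with h | h
      · have h2 := hv k; rw [h] at h2; exact h2
      · have h2 := hv k; rw [h, inner_neg_left, neg_eq_zero] at h2; exact h2
    have hz : ∀ j k : Fin r, ⟪x j, v k⟫ = 0 := by
      intro j k
      rcases hpm j with h | h
      · rw [h]; exact hz0 k
      · rw [h, inner_neg_left, hz0 k, neg_zero]
    refine Finset.sum_eq_zero fun i _ => ?_
    simp [inner_sub_left, inner_sub_right, hz]
end

section
/- Let p : E → X be a smooth surjective submersion of smooth manifolds, r ≥ 2, f ∈ C^1(E), and define F : E^r_X → ℝ by F(u_1,...,u_r) = Σ_{i=1}^r f(u_i). Suppose f satisfies condition (A): whenever u is a critical point of the restriction of f to the fiber p^{-1}({p(u)}), then u is a critical point of f. Then Crit F = {(u_1,...,u_r) ∈ E^r_X : u_i ∈ Crit f for all i} = Crit f ×_X Crit f ×_X ... ×_X Crit f. -/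
theorem map_eq_zero_of_sum_vanishes_on_fiberProduct {ι M N R F G : Type*} [Fintype ι]
    [DecidableEq ι] [AddCommMonoid M] [AddCommMonoid N] [AddCommMonoid R]
    [FunLike F M R] [AddMonoidHomClass F M R] [FunLike G M N] [AddMonoidHomClass G M N]
    (L : ι → F) (P : ι → G)
    (hcrit : ∀ v : ι → M, (∀ i j, P i (v i) = P j (v j)) → ∑ i, L i (v i) = 0)
    (i : ι) {w : M} (hw : P i w = 0) : L i w = 0 := by
  have hsingle : ∀ j, P j ((Pi.single i w : ι → M) j) = 0 := fun j => by
    rcases eq_or_ne j i with rfl | hj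
    · simpa using hw
    · simp [hj]
  have hsum := hcrit (Pi.single i w) fun j k => by rw [hsingle j, hsingle k]
  rwa [Finset.sum_eq_single i (fun j _ hj => by simp [hj]) (by simp), Pi.single_eq_same]
    at hsum

theorem stmt14_general {E X : Type*} [NormedAddCommGroup E] [NormedSpace ℝ E]
    [NormedAddCommGroup X] [NormedSpace ℝ X]
    (r : ℕ)
    (p : E → X)
    (f : E → ℝ)
    -- condition (A): critical points of `f` restricted to fibers are critical for `f`:
    (hA : ∀ e : E, (∀ v, fderiv ℝ p e v = 0 → fderiv ℝ f e v = 0) → fderiv ℝ f e = 0)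
    (u : Fin r → E) :
    -- `u` is a critical point of `F = Σ f(u_i)` on `E^r_X` …
    (∀ v : Fin r → E,
        (∀ i j, fderiv ℝ p (u i) (v i) = fderiv ℝ p (u j) (v j)) →
        ∑ i, fderiv ℝ f (u i) (v i) = 0)
      -- … iff every `u i` is a critical point of `f`:
      ↔ ∀ i, fderiv ℝ f (u i) = 0 := by
  refine ⟨fun hcrit i => hA (u i) fun v hv => ?_, fun hcrit v _ => by simp [hcrit]⟩
  exact map_eq_zero_of_sum_vanishes_on_fiberProduct (fun j => fderiv ℝ f (u j))
    (fun j => fderiv ℝ p (u j)) hcrit i hv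

theorem stmt14 {E X : Type*} [NormedAddCommGroup E] [NormedSpace ℝ E]
    [NormedAddCommGroup X] [NormedSpace ℝ X]
    (r : ℕ) (hr : 2 ≤ r)
    (p : E → X) (hp : Differentiable ℝ p)
    (hsurj : ∀ e : E, Function.Surjective (fderiv ℝ p e))
    (f : E → ℝ) (hf : Differentiable ℝ f)
    -- condition (A): critical points of `f` restricted to fibers are critical for `f`:
    (hA : ∀ e : E, (∀ v, fderiv ℝ p e v = 0 → fderiv ℝ f e v = 0) → fderiv ℝ f e = 0)
    (u : Fin r → E) (hu : ∀ i j, p (u i) = p (u j)) :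
    -- `u` is a critical point of `F = Σ f(u_i)` on `E^r_X` …
    (∀ v : Fin r → E,
        (∀ i j, fderiv ℝ p (u i) (v i) = fderiv ℝ p (u j) (v j)) →
        ∑ i, fderiv ℝ f (u i) (v i) = 0)
      -- … iff every `u i` is a critical point of `f`:
      ↔ ∀ i, fderiv ℝ f (u i) = 0 :=
  stmt14_general r p f hA u
end

section
/- Let n ∈ ℕ and identify ℝ^{2n} ≅ ℂ^n, so that multiplication by i is an orthogonal map with ⟨x, ix⟩ = 0 for all x. Let US^{2n-1} = {(x,v) ∈ S^{2n-1} × ℝ^{2n} : ⟨x,v⟩ = 0, ‖v‖ = 1} be the unit tangent bundle of the sphere and define f : US^{2n-1} → ℝ by f(x,v) = ⟨ix, v⟩. Then the set of critical points of f is Crit f = {(x, ix) : x ∈ S^{2n-1}} ∪ {(x, −ix) : x ∈ S^{2n-1}}, with critical values +1 and −1 respectively. -/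
theorem stmt16 (n : ℕ)
    -- `J` is multiplication by `i` under `ℝ^{2n} ≅ ℂⁿ`: an orthogonal complex structure
    (J : EuclideanSpace ℝ (Fin (2 * n)) →ₗ[ℝ] EuclideanSpace ℝ (Fin (2 * n)))
    (hJsq : ∀ x, J (J x) = -x)
    (hJorth : ∀ x y : EuclideanSpace ℝ (Fin (2 * n)),
      (inner ℝ (J x) (J y) : ℝ) = inner ℝ x y)
    (f : EuclideanSpace ℝ (Fin (2 * n)) × EuclideanSpace ℝ (Fin (2 * n)) → ℝ)
    (hfdef : ∀ q, f q = (inner ℝ (J q.1) q.2 : ℝ)) :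
    -- the set of critical points of `f` on `US^{2n-1}` …
    ({q : EuclideanSpace ℝ (Fin (2 * n)) × EuclideanSpace ℝ (Fin (2 * n)) |
        ‖q.1‖ = 1 ∧ ‖q.2‖ = 1 ∧ (inner ℝ q.1 q.2 : ℝ) = 0 ∧
        ∀ y₁ y₂ : EuclideanSpace ℝ (Fin (2 * n)),
          (inner ℝ q.1 y₁ : ℝ) = 0 → (inner ℝ q.2 y₂ : ℝ) = 0 →
          (inner ℝ q.2 y₁ : ℝ) + (inner ℝ q.1 y₂ : ℝ) = 0 →
          (inner ℝ (J y₁) q.2 : ℝ) + (inner ℝ (J q.1) y₂ : ℝ) = 0}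
      -- … is `{(x, ix)} ∪ {(x, −ix)}` …
      = {q : EuclideanSpace ℝ (Fin (2 * n)) × EuclideanSpace ℝ (Fin (2 * n)) |
          (‖q.1‖ = 1 ∧ q.2 = J q.1) ∨ (‖q.1‖ = 1 ∧ q.2 = -J q.1)}) ∧
    -- … with critical values `+1` and `−1` respectively:
    (∀ x : EuclideanSpace ℝ (Fin (2 * n)), ‖x‖ = 1 →
      f (x, J x) = 1 ∧ f (x, -J x) = -1) := by
  -- antisymmetry of J
  have hanti : ∀ a b : EuclideanSpace ℝ (Fin (2 * n)),
      (inner ℝ (J a) b : ℝ) = -(inner ℝ a (J b) : ℝ) := by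
    intro a b
    have h := hJorth a (J b)
    rw [hJsq, inner_neg_right] at h
    linarith
  have hJx0 : ∀ a : EuclideanSpace ℝ (Fin (2 * n)), (inner ℝ (J a) a : ℝ) = 0 := by
    intro a
    have h := hanti a a
    have h2 : (inner ℝ a (J a) : ℝ) = inner ℝ (J a) a := real_inner_comm _ _
    linarith
  have hnJ : ∀ a : EuclideanSpace ℝ (Fin (2 * n)), ‖J a‖ = ‖a‖ := by
    intro a
    have h := hJorth a a
    rw [real_inner_self_eq_norm_sq, real_inner_self_eq_norm_sq] at h
    nlinarith [norm_nonneg (J a), norm_nonneg a]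
  constructor
  · ext q
    obtain ⟨x, v⟩ := q
    simp only [Set.mem_setOf_eq]
    constructor
    · rintro ⟨hx, hv, hxv, hcrit⟩
      set c : ℝ := inner ℝ (J x) v with hc
      set y₂ : EuclideanSpace ℝ (Fin (2 * n)) := J x - c • v with hy₂
      have hvv : (inner ℝ v v : ℝ) = 1 := by
        rw [real_inner_self_eq_norm_sq, hv]; ring
      have hxJx : (inner ℝ x (J x) : ℝ) = 0 := by
        rw [real_inner_comm]; exact hJx0 x
      have h1 : (inner ℝ x y₂ : ℝ) = 0 := by
        rw [hy₂, inner_sub_right, real_inner_smul_right, hxJx, hxv]; ring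
      have h2 : (inner ℝ v y₂ : ℝ) = 0 := by
        have hcomm : (inner ℝ v (J x) : ℝ) = inner ℝ (J x) v := real_inner_comm _ _
        rw [hy₂, inner_sub_right, real_inner_smul_right, hvv, hcomm, ← hc]; ring
      have h3 : (inner ℝ v (0 : EuclideanSpace ℝ (Fin (2 * n))) : ℝ) + inner ℝ x y₂ = 0 := by
        rw [inner_zero_right, h1]; ring
      have hin0 : (inner ℝ x (0 : EuclideanSpace ℝ (Fin (2 * n))) : ℝ) = 0 := inner_zero_right _
      have hcr := hcrit 0 y₂ hin0 h2 h3
      have hJxJx : (inner ℝ (J x) (J x) : ℝ) = 1 := by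
        rw [hJorth, real_inner_self_eq_norm_sq, hx]; ring
      have hJxy₂ : (inner ℝ (J x) y₂ : ℝ) = 1 - c ^ 2 := by
        rw [hy₂, inner_sub_right, real_inner_smul_right, hJxJx, ← hc]; ring
      have hc2 : c ^ 2 = 1 := by
        rw [map_zero, inner_zero_left, hJxy₂] at hcr
        linarith
      -- now y₂ = 0
      have hy0 : y₂ = 0 := by
        have hnorm : (inner ℝ y₂ y₂ : ℝ) = 0 := by
          rw [hy₂, inner_sub_left, real_inner_smul_left, ← hy₂, hJxy₂, h2, hc2]
          ring
        rw [real_inner_self_eq_norm_sq] at hnorm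
        have : ‖y₂‖ = 0 := by nlinarith [norm_nonneg y₂]
        exact norm_eq_zero.mp this
      have hJxv : J x = c • v := by
        have := sub_eq_zero.mp hy0
        exact this
      have hvc : v = c • J x := by
        rw [hJxv, smul_smul]
        have : c * c = 1 := by nlinarith
        rw [this, one_smul]
      have : c = 1 ∨ c = -1 := mul_self_eq_one_iff.mp (by nlinarith)
      rcases this with h | h
      · left; exact ⟨hx, by rw [hvc, h, one_smul]⟩
      · right; exact ⟨hx, by rw [hvc, h, neg_one_smul]⟩
    · rintro (⟨hx, rfl⟩ | ⟨hx, rfl⟩)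
      · refine ⟨hx, by rw [hnJ, hx], by rw [real_inner_comm]; exact hJx0 x, ?_⟩
        intro y₁ y₂ h1 h2 h3
        have hA : (inner ℝ (J y₁) (J x) : ℝ) = 0 := by
          rw [hJorth, real_inner_comm]; exact h1
        rw [hA, h2]; ring
      · refine ⟨hx, by rw [norm_neg, hnJ, hx], by
          rw [inner_neg_right, real_inner_comm, hJx0]; ring, ?_⟩
        intro y₁ y₂ h1 h3 h4
        have h2 : (inner ℝ (J x) y₂ : ℝ) = 0 := by
          rw [inner_neg_left] at h3; linarith
        have hA : (inner ℝ (J y₁) (-J x) : ℝ) = 0 := by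
          rw [inner_neg_right, hJorth, real_inner_comm, h1]; ring
        rw [hA, h2]; ring
  · intro x hx
    constructor
    · rw [hfdef]
      simp only
      rw [hJorth, real_inner_self_eq_norm_sq, hx]; ring
    · rw [hfdef]
      simp only
      rw [inner_neg_right, hJorth, real_inner_self_eq_norm_sq, hx]; ring
end

section
/- Let E, X be manifolds, p : E → X a smooth surjective submersion, g a Riemannian metric on E, and let ḡ denote the restriction of the product metric g^r to the submanifold E^r_X ⊆ E^r. Let f ∈ C^1(E) and F : E^r_X → ℝ, F(u_1,...,u_r) = Σ_i f(u_i). If the gradient ∇^g f is vertically proportional with respect to p and g (i.e. there is C > 0 with ‖∇^g f(e)‖ ≤ C · ‖∇^{ver} f(e)‖ for all e ∈ E), then ∇^{ḡ} F is vertically proportional with respect to q_r : E^r_X → X, q_r(u) = p(u_1), and ḡ, with the same constant C. -/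
open scoped RealInnerProductSpace

theorem stmt19 {E X : Type*}
    [NormedAddCommGroup E] [InnerProductSpace ℝ E] [FiniteDimensional ℝ E]
    [NormedAddCommGroup X] [NormedSpace ℝ X]
    (r : ℕ) (hr : 2 ≤ r)
    -- `p : E → X` is a smooth surjective submersion:
    (p : E → X) (hp : Differentiable ℝ p)
    (hsurj : ∀ e : E, Function.Surjective (fderiv ℝ p e))
    (f : E → ℝ) (hf : Differentiable ℝ f)
    -- `∇f` is vertically proportional with respect to `p` and `g`, constant `C`:
    (C : ℝ) (hC : 0 < C)
    (hvp : ∀ e : E, ‖gradient f e‖ ≤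
      C * ‖(Submodule.orthogonalProjectionOnto (LinearMap.ker (fderiv ℝ p e : E →ₗ[ℝ] X)) (gradient f e) : E)‖)
    -- a point `u ∈ E^r_X`:
    (u : Fin r → E) (hu : ∀ i j, p (u i) = p (u j))
    -- `gradF` is the gradient `∇^ḡ F(u)` of `F(u₁,…,u_r) = Σ f(u_i)` on `E^r_X`
    -- with respect to the restricted product metric `ḡ`: it is tangent to `E^r_X`
    -- and represents the differential of `F` on the tangent space `T_u E^r_X`:
    (gradF : PiLp 2 fun _ : Fin r => E)
    (htang : ∀ i j, fderiv ℝ p (u i) (gradF i) = fderiv ℝ p (u j) (gradF j))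
    (hrepr : ∀ v : PiLp 2 fun _ : Fin r => E,
      (∀ i j, fderiv ℝ p (u i) (v i) = fderiv ℝ p (u j) (v j)) →
      (inner ℝ gradF v : ℝ) = ∑ i, fderiv ℝ f (u i) (v i)) :
    -- then `‖∇^ḡ F(u)‖ ≤ C ⬝ ‖∇^ver F(u)‖`, where the vertical part `∇^ver F(u)`,
    -- the orthogonal projection onto `Ver_u(q_r) = Π_i Ver_{u_i}(p)`, is computed
    -- componentwise:
    ‖gradF‖ ≤ C * ‖(show PiLp 2 fun _ : Fin r => E from
      WithLp.toLp 2 (show Fin r → E from fun i => (Submodule.orthogonalProjectionOnto (LinearMap.ker (fderiv ℝ p (u i) : E →ₗ[ℝ] X)) (gradF i) : E)))‖ := by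
  classical
  set V : Fin r → Submodule ℝ E := fun i => LinearMap.ker (fderiv ℝ p (u i) : E →ₗ[ℝ] X) with hV
  set g : PiLp 2 (fun _ : Fin r => E) := WithLp.toLp 2 (fun i => gradient f (u i)) with hg
  have hgrad : ∀ (e : E) (w : E), fderiv ℝ f e w = ⟪gradient f e, w⟫ := by
    intro e w
    rw [gradient]
    exact (InnerProductSpace.toDual_symm_apply).symm
  -- componentwise projection equality
  have hproj : ∀ i, Submodule.orthogonalProjectionOnto (V i) (gradF i)
      = Submodule.orthogonalProjectionOnto (V i) (g i) := by
    intro i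
    have hmem : gradF i - g i ∈ (V i)ᗮ := by
      rw [Submodule.mem_orthogonal']
      intro w hw
      have hwker : fderiv ℝ p (u i) w = 0 := hw
      set vv : PiLp 2 (fun _ : Fin r => E) := WithLp.toLp 2 (fun j => if j = i then w else 0) with hvv
      have hcond : ∀ j k, fderiv ℝ p (u j) (vv j)
          = fderiv ℝ p (u k) (vv k) := by
        intro j k
        rcases eq_or_ne j i with rfl | hj
        · rcases eq_or_ne k j with rfl | hk
          · rfl
          · simp [hvv, hk, hwker]
        · rcases eq_or_ne k i with rfl | hk
          · simp [hvv, hj, hwker]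
          · simp [hvv, hj, hk]
      have h1 := hrepr vv hcond
      have h2 : (inner ℝ gradF vv : ℝ) = ⟪gradF i, w⟫ := by
        rw [PiLp.inner_apply]
        rw [Finset.sum_eq_single i]
        · simp [hvv]
        · intro j _ hj; simp [hvv, hj]
        · simp
      have h3 : (∑ j, fderiv ℝ f (u j) (vv j)) = ⟪g i, w⟫ := by
        rw [Finset.sum_eq_single i]
        · have : vv i = w := by simp [hvv]
          rw [this]; exact hgrad _ _
        · intro j _ hj; simp [hvv, hj]
        · simp
      have : ⟪gradF i, w⟫ = ⟪g i, w⟫ := by rw [← h2, h1, h3]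
      rw [inner_sub_left, this, sub_self]
    have hz : Submodule.orthogonalProjectionOnto (V i) (gradF i - g i) = 0 :=
      Submodule.orthogonalProjectionOnto_apply_of_mem_orthogonal hmem
    rw [map_sub, sub_eq_zero] at hz
    exact hz
  set Pg : PiLp 2 (fun _ : Fin r => E) :=
    WithLp.toLp 2 (fun i => (Submodule.orthogonalProjectionOnto (V i) (gradF i) : E)) with hPg
  -- step A : ‖gradF‖ ≤ ‖g‖
  have hA : ‖gradF‖ ≤ ‖g‖ := by
    have h1 : (inner ℝ gradF gradF : ℝ) = inner ℝ g gradF := by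
      rw [hrepr gradF htang, PiLp.inner_apply]
      exact Finset.sum_congr rfl fun j _ => hgrad _ _
    have h2 : ‖gradF‖ ^ 2 ≤ ‖g‖ * ‖gradF‖ := by
      rw [← real_inner_self_eq_norm_sq, h1]
      exact real_inner_le_norm _ _
    rcases eq_or_lt_of_le (norm_nonneg gradF) with h0 | h0
    · rw [← h0]; exact norm_nonneg g
    · nlinarith
  -- step B : ‖g‖ ≤ C * ‖Pg‖
  have hB : ‖g‖ ≤ C * ‖Pg‖ := by
    have hsq : ‖g‖ ^ 2 ≤ C ^ 2 * ‖Pg‖ ^ 2 := by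
      rw [PiLp.norm_sq_eq_of_L2, PiLp.norm_sq_eq_of_L2, Finset.mul_sum]
      apply Finset.sum_le_sum
      intro i _
      have := hvp (u i)
      have h4 : ‖g i‖ ≤ C * ‖(Submodule.orthogonalProjectionOnto (V i) (g i) : E)‖ := this
      have h5 : ‖Pg i‖ = ‖(Submodule.orthogonalProjectionOnto (V i) (g i) : E)‖ := by
        rw [hPg]; simp only [hproj i]
      rw [h5]
      nlinarith [norm_nonneg (g i), norm_nonneg ((Submodule.orthogonalProjectionOnto (V i) (g i) : E))]
    nlinarith [norm_nonneg g, norm_nonneg Pg, mul_nonneg hC.le (norm_nonneg Pg)]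
  calc ‖gradF‖ ≤ ‖g‖ := hA
    _ ≤ C * ‖Pg‖ := hB
end
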